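/- Let T ∈ L(E) be invertible and W an orthogonally complemented reducing submodule for T. If 0 is not in the C*-numerical range ω(T) = {⟨Tx, x⟩ : x ∈ E, ‖x‖ = 1}, then W is a reducing submodule for T^{-1}. -/

import Mathlib

/-! Write `T⁻¹ x = u + v` with `u ∈ W`, `v ∈ W⊥`. If `x ∈ W`, then `T v = x - T u` lies in `W`
and, since `T` reduces `W`, also in `W⊥`; hence `T v = 0`, so `v = 0` and `T⁻¹ x = u ∈ W`.
The case `x ∈ W⊥` is symmetric. -/

open scoped RightActions

/-- The December 2024 Mathlib `CStarModule` (right Hilbert C⋆-module, `SMul Aᵐᵒᵖ E`). -/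
class CStarModuleOld (A E : Type*) [NonUnitalSemiring A] [StarRing A] [Module ℂ A]
    [AddCommGroup E] [Module ℂ E] [PartialOrder A] [SMul Aᵐᵒᵖ E] [Norm A] [Norm E]
    extends Inner A E where
  inner_add_right {x} {y} {z} : inner x (y + z) = inner x y + inner x z
  inner_self_nonneg {x} : 0 ≤ inner x x
  inner_self {x} : inner x x = 0 ↔ x = 0
  inner_op_smul_right {a : A} {x y : E} : inner x (y <• a) = inner x y * a
  inner_smul_right_complex {z : ℂ} {x} {y} : inner x (z • y) = z • inner x y
  star_inner x y : star (inner x y) = inner y x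
  norm_eq_sqrt_norm_inner_self x : ‖x‖ = √‖inner x x‖

section

variable {A : Type*} [CStarAlgebra A] [PartialOrder A] [StarOrderedRing A]
variable {E : Type*} [NormedAddCommGroup E] [NormedSpace ℂ E] [SMul Aᵐᵒᵖ E]
  [CStarModuleOld A E] [CompleteSpace E]

local notation "⟪" x ", " y "⟫" => inner (𝕜 := A) x y

/-- `T` is a bounded adjointable `A`-linear operator with adjoint `T'`. -/
def IsAdjointableWith (T T' : E →L[ℂ] E) : Prop :=
  (∀ (a : A) (x : E), T (x <• a) = T x <• a) ∧
  ∀ x y : E, ⟪T x, y⟫ = ⟪x, T' y⟫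

/-- The orthogonal complement of a subset of a Hilbert C*-module. -/
def ortho (W : Set E) : Set E := {y | ∀ x ∈ W, ⟪x, y⟫ = (0 : A)}

/-- `W` is orthogonally complemented in `E`. -/
def OrthoComplemented (W : Set E) : Prop :=
  ∀ z : E, ∃ x ∈ W, ∃ y ∈ ortho (A := A) W, z = x + y

/-- `W` is a closed `A`-submodule of `E`. -/
def IsClosedSubmodule (W : Submodule ℂ E) : Prop :=
  IsClosed (W : Set E) ∧ ∀ (a : A), ∀ x ∈ W, x <• a ∈ W

/-- An orthogonal projection in `L(E)`: an `A`-linear, idempotent, self-adjoint operator. -/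
def IsOrthoProjection (P : E →L[ℂ] E) : Prop :=
  (∀ (a : A) (x : E), P (x <• a) = P x <• a) ∧ P.comp P = P ∧
  ∀ x y : E, ⟪P x, y⟫ = ⟪x, P y⟫

/-- A "compact" operator on a Hilbert C*-module: a member of the closure of the span
of the rank-one operators `z ↦ x ⟨y, z⟩`. -/
def IsCompactOp (K : E →L[ℂ] E) : Prop :=
  K ∈ closure (Submodule.span ℂ
    {S : E →L[ℂ] E | ∃ x y : E, ∀ z : E, S z = x <• ⟪y, z⟫} : Set (E →L[ℂ] E))

/-- `E` is a finitely generated Hilbert `A`-module. -/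
def IsFinGen : Prop :=
  ∃ (n : ℕ) (g : Fin n → E), ∀ x : E,
    x ∈ Submodule.span ℂ {y : E | ∃ (i : Fin n) (a : A), y = g i <• a}

/-- `T` is invertible in `L(E)`, the bounded adjointable operators. -/
def InvertibleInL (T : E →L[ℂ] E) : Prop :=
  ∃ S S' : E →L[ℂ] E, IsAdjointableWith (A := A) S S' ∧ S.comp T = 1 ∧ T.comp S = 1

theorem Submodule.comap_le_of_codisjoint_of_disjoint {R M N : Type*} [Ring R]
    [AddCommGroup M] [Module R M] [AddCommGroup N] [Module R N]
    {p q : Submodule R M} {p' q' : Submodule R N} (hpq : Codisjoint p q)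
    (hpq' : Disjoint p' q') {f : M →ₗ[R] N} (hf : Function.Injective f)
    (hp : p ≤ p'.comap f) (hq : q ≤ q'.comap f) :
    p'.comap f ≤ p := by
  intro x hx
  obtain ⟨u, v, hu, hv, rfl⟩ := Submodule.codisjoint_iff_exists_add_eq.mp hpq x
  have hfv : f v ∈ p' := by
    simpa only [map_add, add_sub_cancel_left] using p'.sub_mem hx (hp hu)
  have hv : v = 0 := hf <| by rw [map_zero]; exact Submodule.disjoint_def.mp hpq' _ hfv (hq hv)
  simpa only [hv, add_zero] using hu

def orthoSubmodule (W : Set E) : Submodule ℂ E where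
  carrier := ortho (A := A) W
  add_mem' hy hz x hx := by rw [CStarModuleOld.inner_add_right, hy x hx, hz x hx, add_zero]
  zero_mem' x _ := by
    simpa using CStarModuleOld.inner_smul_right_complex (A := A) (z := 0) (x := x) (y := 0)
  smul_mem' c y hy x hx := by
    rw [CStarModuleOld.inner_smul_right_complex, hy x hx, smul_zero]

omit [StarOrderedRing A] [CompleteSpace E] in
theorem disjoint_orthoSubmodule (W : Submodule ℂ E) : Disjoint W (orthoSubmodule (A := A) W) :=
  Submodule.disjoint_def.mpr fun z hz hz' => CStarModuleOld.inner_self.mp (hz' z hz)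

omit [StarOrderedRing A] [CompleteSpace E] in
theorem OrthoComplemented.codisjoint_orthoSubmodule {W : Submodule ℂ E}
    (hW : OrthoComplemented (A := A) (W : Set E)) : Codisjoint W (orthoSubmodule (A := A) W) :=
  Submodule.codisjoint_iff_exists_add_eq.mpr fun z =>
    let ⟨x, hx, y, hy, hz⟩ := hW z
    ⟨x, y, hx, hy, hz.symm⟩

theorem stmt13_general (T Tinv : E →L[ℂ] E)
    (hinv1 : T.comp Tinv = 1) (hinv2 : Tinv.comp T = 1)
    (W : Submodule ℂ E)
    (hWc : OrthoComplemented (A := A) (W : Set E))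
    (hinvW : ∀ x ∈ W, T x ∈ W)
    (hinvW' : ∀ y ∈ ortho (A := A) (W : Set E), T y ∈ ortho (A := A) (W : Set E)) :
    (∀ x ∈ W, Tinv x ∈ W) ∧
    (∀ y ∈ ortho (A := A) (W : Set E), Tinv y ∈ ortho (A := A) (W : Set E)) := by
  have hT : Function.Injective T :=
    Function.LeftInverse.injective (g := Tinv) fun z => congr($hinv2 z)
  have hTTinv (z : E) : T (Tinv z) = z := congr($hinv1 z)
  have hcodisj := hWc.codisjoint_orthoSubmodule
  have hdisj := disjoint_orthoSubmodule (A := A) W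
  refine ⟨fun x hx => ?_, fun y hy => ?_⟩
  · exact Submodule.comap_le_of_codisjoint_of_disjoint (f := (T : E →ₗ[ℂ] E)) hcodisj hdisj
      hT hinvW hinvW' (show T (Tinv x) ∈ W by rwa [hTTinv])
  · exact Submodule.comap_le_of_codisjoint_of_disjoint (f := (T : E →ₗ[ℂ] E)) hcodisj.symm
      hdisj.symm hT hinvW' hinvW
      (show T (Tinv y) ∈ ortho (A := A) (W : Set E) by rwa [hTTinv])

/-- If `T` is invertible, `W` is an orthogonally complemented reducing submodule for `T`, and
`0` is not in the C*-numerical range of `T`, then `W` is a reducing submodule for `T⁻¹`. -/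
theorem stmt13 (T T' Tinv : E →L[ℂ] E) (hT : IsAdjointableWith (A := A) T T')
    (hinv1 : T.comp Tinv = 1) (hinv2 : Tinv.comp T = 1)
    (W : Submodule ℂ E) (hWcl : IsClosedSubmodule (A := A) W)
    (hWc : OrthoComplemented (A := A) (W : Set E))
    (hinvW : ∀ x ∈ W, T x ∈ W)
    (hinvW' : ∀ y ∈ ortho (A := A) (W : Set E), T y ∈ ortho (A := A) (W : Set E))
    (hnum : ∀ x : E, ‖x‖ = 1 → ⟪T x, x⟫ ≠ (0 : A)) :
    (∀ x ∈ W, Tinv x ∈ W) ∧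
    (∀ y ∈ ortho (A := A) (W : Set E), Tinv y ∈ ortho (A := A) (W : Set E)) :=
  stmt13_general T Tinv hinv1 hinv2 W hWc hinvW hinvW'

end
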